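/- arXiv:1901.03917 — 2 statements merged into one kernel-verified Lean document; each statement's English description precedes it below -/
import Mathlib

section
/- The Bubble-sort graph BS_5 (on the 120 permutations of {1,…,5}) contains a Hamiltonian cycle. -/
/-!
The Steinhaus–Johnson–Trotter algorithm lists the permutations of `{1, …, n}` so that consecutive
ones differ by an adjacent transposition: it is a Hamiltonian path of `BS_n` from the identity.
For `n ≥ 3` the path ends at `b_1`, a neighbour of the identity, so it closes up into a
Hamiltonian cycle. For `n = 5` the distinctness of the 120 vertices of that cycle is checked by
evaluation.
-/

/-- The adjacent transposition `b_i` (1-indexed, swapping positions `i` and `i+1`,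
i.e. the 0-indexed positions `i-1` and `i` of `Fin n`), extended by `1` outside
the valid range `1 ≤ i ≤ n-1`. -/
def bsGen (n i : ℕ) : Equiv.Perm (Fin n) :=
  if h : 0 < i ∧ i < n then
    Equiv.swap ⟨i - 1, lt_of_le_of_lt (Nat.pred_le i) h.2⟩ ⟨i, h.2⟩
  else 1

theorem bsGen_ne_one (n i : ℕ) (h1 : 0 < i) (h2 : i < n) : bsGen n i ≠ 1 := by
  rw [bsGen, dif_pos ⟨h1, h2⟩]
  intro h
  have h' := congrArg Fin.val (Equiv.swap_eq_one_iff.mp h)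
  simp at h'
  omega

theorem bsGen_mul_self (n i : ℕ) : bsGen n i * bsGen n i = 1 := by
  rw [bsGen]; split
  · exact Equiv.swap_mul_self _ _
  · simp

/-- The Bubble-sort graph `BS_n` on the symmetric group `Sym_n = Equiv.Perm (Fin n)`:
`π` and `τ` are adjacent iff `τ = π * b_i` for some `1 ≤ i ≤ n-1`. -/
def BS (n : ℕ) : SimpleGraph (Equiv.Perm (Fin n)) where
  Adj π τ := ∃ i, 0 < i ∧ i < n ∧ τ = π * bsGen n i
  symm := by
    constructor
    rintro π τ ⟨i, h1, h2, rfl⟩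
    exact ⟨i, h1, h2, by rw [mul_assoc, bsGen_mul_self, mul_one]⟩
  loopless := by
    constructor
    rintro π ⟨i, h1, h2, h⟩
    exact bsGen_ne_one n i h1 h2 (left_eq_mul.mp h)

namespace SimpleGraph.Walk

variable {V : Type*} [DecidableEq V] {G : SimpleGraph V} {u : V}

theorem isHamiltonianCycle_of_support_tail_nodup [Fintype V] {p : G.Walk u u}
    (hnd : p.support.tail.Nodup) (hcard : p.support.tail.length = Fintype.card V)
    (h3 : 3 ≤ Fintype.card V) : p.IsHamiltonianCycle := by
  have hlen : p.length = Fintype.card V := by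
    rw [← hcard, List.length_tail, length_support, Nat.add_sub_cancel]
  have hnil : ¬p.Nil := by rw [← length_eq_zero_iff]; omega
  refine isHamiltonianCycle_iff_isCycle_and_length_eq.mpr ⟨?_, hlen⟩
  refine isCycle_iff_isPath_tail_and_le_length.mpr ⟨?_, by omega⟩
  rwa [isPath_def, support_tail_of_not_nil _ hnil]

end SimpleGraph.Walk

namespace BS

theorem isChain_adj_scanl {n : ℕ} (π : Equiv.Perm (Fin n)) {L : List ℕ}
    (hL : ∀ i ∈ L, 0 < i ∧ i < n) :
    (L.scanl (fun τ i => τ * bsGen n i) π).IsChain (BS n).Adj := by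
  induction L generalizing π with
  | nil => exact .singleton π
  | cons i L ih =>
    obtain ⟨hi, hi'⟩ := hL i List.mem_cons_self
    rw [List.scanl_cons, List.isChain_cons, List.head?_scanl]
    exact ⟨fun τ hτ => ⟨i, hi, hi', (Option.some_injective _ hτ).symm⟩,
      ih _ fun j hj => hL j (List.mem_cons_of_mem i hj)⟩

theorem exists_walk_support_eq_scanl {n : ℕ} (π : Equiv.Perm (Fin n)) {L : List ℕ}
    (hL : ∀ i ∈ L, 0 < i ∧ i < n) (hclosed : L.foldl (fun τ i => τ * bsGen n i) π = π) :
    ∃ w : (BS n).Walk π π, w.support = L.scanl (fun τ i => τ * bsGen n i) π := by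
  have hne := List.scanl_ne_nil (f := fun τ i => τ * bsGen n i) (b := π) (l := L)
  refine ⟨(SimpleGraph.Walk.ofSupport _ hne (isChain_adj_scanl π hL)).copy
    (List.head_scanl ..) ((List.getLast_scanl ..).trans hclosed), ?_⟩
  simp

end BS

def sjtSweep (n k : ℕ) : List ℕ :=
  if Even k then (List.range' 1 n).reverse else List.range' 1 n

/-- The positions of the successive adjacent swaps of the Steinhaus–Johnson–Trotter path through
`Sym_n`. The entry `n` sweeps across all positions, alternately right to left and left to right;
between two sweeps the other entries take one step of the path for `n - 1`, shifted by one position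
when `n` stands in front. -/
def sjtWord : ℕ → List ℕ
  | 0 => []
  | n + 1 => sjtSweep n 0 ++ ((sjtWord n).zipIdx.flatMap fun (g, k) =>
      (if Even k then g + 1 else g) :: sjtSweep n (k + 1))

set_option maxRecDepth 10000

/-- the Bubble-sort graph `BS_5` contains a Hamiltonian cycle. -/
theorem bs_five_hamiltonian_cycle :
    ∃ (π : Equiv.Perm (Fin 5)) (w : (BS 5).Walk π π), w.IsHamiltonianCycle := by
  -- the path ends at `b_1`, so a final swap at position 1 closes it
  obtain ⟨w, hw⟩ := BS.exists_walk_support_eq_scanl (n := 5) 1 (L := sjtWord 5 ++ [1])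
    (by decide) (by decide)
  have hcard : Fintype.card (Equiv.Perm (Fin 5)) = 120 := by
    rw [Fintype.card_perm, Fintype.card_fin]; rfl
  refine ⟨1, w, w.isHamiltonianCycle_of_support_tail_nodup ?_ ?_ (by omega)⟩
  · rw [hw]; decide
  · rw [hw, hcard]; decide
end

section
/- Let n ≥ 5. For each 2-element subset S of {1, …, n}, let V_S = {π ∈ Sym_n : {π(n−1), π(n)} = S}. Then for distinct 2-element subsets S and T, there exists an edge of the Bubble-sort graph BS_n with one endpoint in V_S and the other in V_T if and only if |S ∩ T| = 1, and every such edge is a b_{n−2}-edge; consequently the factor graph of BS_n with respect to the partition {V_S} is isomorphic to the Johnson graph J(n, 2), whose vertices are the 2-element subsets of {1, …, n} with S adjacent to T iff |S ∩ T| = 1. -/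
/-!
The block of `π` is the image under `π` of the last two positions. Right multiplication by
`b_i` permutes positions, so it keeps the block unless `b_i` moves exactly one of the last two
positions, i.e. `i = n - 2`; then the block `{π(n-1), π(n)}` becomes `{π(n-2), π(n)}`, which
meets it in exactly one entry. Conversely, for `S = {a, c}` and `T = {b, c}`, the
3-transitivity of `Sym_n` gives `π` with `π(n-2), π(n-1), π(n) = b, a, c`, and `π — π b_{n-2}`
is an edge from `V_S` to `V_T`.
-/

open Equiv Finset

theorem Equiv.Perm.exists_apply_eq_of_three {α : Type*} {p q r x y z : α}
    (hpq : p ≠ q) (hpr : p ≠ r) (hqr : q ≠ r) (hxy : x ≠ y) (hxz : x ≠ z) (hyz : y ≠ z) :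
    ∃ σ : Perm α, σ p = x ∧ σ q = y ∧ σ r = z := by
  have injective_of_ne {a b c : α} (hab : a ≠ b) (hac : a ≠ c) (hbc : b ≠ c) :
      Function.Injective ![a, b, c] := by
    intro i j
    fin_cases i <;> fin_cases j <;> simp_all [eq_comm]
  obtain ⟨σ, hσ⟩ := Perm.exists_extending_pair _ _
    (injective_of_ne hpq hpr hqr) (injective_of_ne hxy hxz hyz)
  exact ⟨σ, hσ 0, hσ 1, hσ 2⟩

theorem Finset.exists_eq_pair_of_card_inter_eq_one {α : Type*} [DecidableEq α]
    {S T : Finset α} (hS : #S = 2) (hT : #T = 2) (h : #(S ∩ T) = 1) :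
    ∃ a b c, a ≠ b ∧ a ≠ c ∧ b ≠ c ∧ S = {a, c} ∧ T = {b, c} := by
  obtain ⟨c, hc⟩ := card_eq_one.mp h
  have hcST : c ∈ S ∩ T := hc ▸ mem_singleton_self c
  obtain ⟨hcS, hcT⟩ := mem_inter.mp hcST
  obtain ⟨a, ha⟩ := card_eq_one.mp (by rw [card_erase_of_mem hcS, hS] : #(S.erase c) = 1)
  obtain ⟨b, hb⟩ := card_eq_one.mp (by rw [card_erase_of_mem hcT, hT] : #(T.erase c) = 1)
  have haS : a ∈ S.erase c := ha ▸ mem_singleton_self a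
  have hbT : b ∈ T.erase c := hb ▸ mem_singleton_self b
  have hac : a ≠ c := ne_of_mem_erase haS
  refine ⟨a, b, c, ?_, hac, ne_of_mem_erase hbT, ?_, ?_⟩
  · rintro rfl
    have haST : a ∈ S ∩ T := mem_inter.mpr ⟨mem_of_mem_erase haS, mem_of_mem_erase hbT⟩
    exact hac (mem_singleton.mp (hc ▸ haST))
  · rw [← insert_erase hcS, ha, pair_comm]
  · rw [← insert_erase hcT, hb, pair_comm]

/-- The 0-indexed positions `n - 2`, `n - 1` of `Fin n`: the last two positions of the paper. -/
def tailPositions (n : ℕ) : Finset (Fin n) := {k | n - 2 ≤ (k : ℕ)}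

/-- The 2-set `S` with `π ∈ V_S`. -/
def tailEntries {n : ℕ} (π : Perm (Fin n)) : Finset (Fin n) :=
  (tailPositions n).map π.toEmbedding

section

variable {n : ℕ}

theorem tailPositions_eq (hn : 2 ≤ n) :
    tailPositions n = {⟨n - 2, by omega⟩, ⟨n - 1, by omega⟩} := by
  ext k
  simp only [tailPositions, mem_filter, mem_univ, true_and, mem_insert, mem_singleton,
    Fin.ext_iff]
  omega

theorem tailEntries_eq_pair (hn : 2 ≤ n) (π : Perm (Fin n)) :
    tailEntries π = {π ⟨n - 2, by omega⟩, π ⟨n - 1, by omega⟩} := by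
  simp [tailEntries, tailPositions_eq hn]

theorem tailEntries_mul (π σ : Perm (Fin n)) :
    tailEntries (π * σ) = ((tailPositions n).map σ.toEmbedding).map π.toEmbedding := by
  simp only [tailEntries, map_map]
  rfl

theorem bsGen_eq_swap {i : ℕ} (h0 : 0 < i) (hi : i < n) :
    bsGen n i = swap ⟨i - 1, by omega⟩ ⟨i, hi⟩ :=
  dif_pos ⟨h0, hi⟩

/-- Away from `b_{n-2}`, a generator either fixes both tail positions or swaps them. -/
theorem map_bsGen_tailPositions_of_ne {i : ℕ} (h0 : 0 < i) (hi : i < n) (hne : i ≠ n - 2) :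
    (tailPositions n).map (bsGen n i).toEmbedding = tailPositions n := by
  ext k
  simp only [mem_map_equiv, bsGen_eq_swap h0 hi, symm_swap, tailPositions, mem_filter,
    mem_univ, true_and, swap_apply_def, apply_ite Fin.val, Fin.ext_iff]
  split_ifs <;> omega

theorem map_bsGen_tailPositions (hn : 3 ≤ n) :
    (tailPositions n).map (bsGen n (n - 2)).toEmbedding =
      {⟨n - 3, by omega⟩, ⟨n - 1, by omega⟩} := by
  ext k
  rw [bsGen_eq_swap (by omega) (by omega : n - 2 < n)]
  simp only [mem_map_equiv, symm_swap, tailPositions, mem_filter, mem_univ, true_and,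
    swap_apply_def, apply_ite Fin.val, Fin.ext_iff, mem_insert, mem_singleton]
  split_ifs <;> omega

theorem tailEntries_mul_bsGen_of_ne (π : Perm (Fin n)) {i : ℕ} (h0 : 0 < i) (hi : i < n)
    (hne : i ≠ n - 2) : tailEntries (π * bsGen n i) = tailEntries π := by
  rw [tailEntries_mul, map_bsGen_tailPositions_of_ne h0 hi hne, tailEntries]

theorem tailEntries_mul_bsGen (hn : 3 ≤ n) (π : Perm (Fin n)) :
    tailEntries (π * bsGen n (n - 2)) = {π ⟨n - 3, by omega⟩, π ⟨n - 1, by omega⟩} := by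
  simp [tailEntries_mul, map_bsGen_tailPositions hn]

theorem card_tailEntries_inter_mul_bsGen (hn : 3 ≤ n) (π : Perm (Fin n)) :
    #(tailEntries π ∩ tailEntries (π * bsGen n (n - 2))) = 1 := by
  have hinter : tailPositions n ∩ (tailPositions n).map (bsGen n (n - 2)).toEmbedding =
      {⟨n - 1, by omega⟩} := by
    rw [map_bsGen_tailPositions hn, tailPositions_eq (by omega)]
    ext k
    simp only [mem_inter, mem_insert, mem_singleton, Fin.ext_iff]
    omega
  rw [tailEntries_mul, tailEntries, ← map_inter, hinter, card_map, card_singleton]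

theorem eq_mul_bsGen_of_adj_of_tailEntries_ne {π τ : Perm (Fin n)} (hadj : (BS n).Adj π τ)
    (hne : tailEntries π ≠ tailEntries τ) : τ = π * bsGen n (n - 2) := by
  obtain ⟨i, h0, hi, rfl⟩ := hadj
  obtain rfl | hi' := eq_or_ne i (n - 2)
  · rfl
  · exact absurd (tailEntries_mul_bsGen_of_ne π h0 hi hi').symm hne

theorem exists_tailEntries_eq_of_card_inter_eq_one (hn : 3 ≤ n) {S T : Finset (Fin n)}
    (hS : #S = 2) (hT : #T = 2) (h : #(S ∩ T) = 1) :
    ∃ π : Perm (Fin n), tailEntries π = S ∧ tailEntries (π * bsGen n (n - 2)) = T := by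
  obtain ⟨a, b, c, hab, hac, hbc, rfl, rfl⟩ := exists_eq_pair_of_card_inter_eq_one hS hT h
  obtain ⟨π, hπb, hπa, hπc⟩ := Perm.exists_apply_eq_of_three
    (p := ⟨n - 3, by omega⟩) (q := ⟨n - 2, by omega⟩) (r := ⟨n - 1, by omega⟩)
    (by simp [Fin.ext_iff]; omega) (by simp [Fin.ext_iff]; omega)
    (by simp [Fin.ext_iff]; omega) hab.symm hbc hac
  refine ⟨π, ?_, ?_⟩
  · rw [tailEntries_eq_pair (by omega), hπa, hπc]
  · rw [tailEntries_mul_bsGen hn, hπb, hπc]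

theorem exists_adj_tailEntries_iff (hn : 3 ≤ n) {S T : Finset (Fin n)} (hS : #S = 2)
    (hT : #T = 2) (hST : S ≠ T) :
    (∃ π τ : Perm (Fin n), tailEntries π = S ∧ tailEntries τ = T ∧ (BS n).Adj π τ) ↔
      #(S ∩ T) = 1 := by
  constructor
  · rintro ⟨π, τ, rfl, rfl, hadj⟩
    rw [eq_mul_bsGen_of_adj_of_tailEntries_ne hadj hST]
    exact card_tailEntries_inter_mul_bsGen hn π
  · intro h
    obtain ⟨π, rfl, rfl⟩ := exists_tailEntries_eq_of_card_inter_eq_one hn hS hT h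
    exact ⟨π, _, rfl, rfl, n - 2, by omega, by omega, rfl⟩

end

/-- for `n ≥ 5` and distinct 2-element subsets `S, T` of entries, there is
an edge of `BS_n` between `V_S = {π : {π(n-1), π(n)} = S}` and `V_T` iff `|S ∩ T| = 1`,
every such edge is a `b_{n-2}`-edge, and consequently the factor graph of `BS_n` with
respect to the partition `{V_S}` is isomorphic to the Johnson graph `J(n, 2)`. -/
theorem bs_factor_graph_is_johnson (n : ℕ) (hn : 5 ≤ n) :
    (∀ S T : Finset (Fin n), S.card = 2 → T.card = 2 → S ≠ T →
      ((∃ π τ : Equiv.Perm (Fin n),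
          ({π ⟨n - 2, by omega⟩, π ⟨n - 1, by omega⟩} : Finset (Fin n)) = S ∧
          ({τ ⟨n - 2, by omega⟩, τ ⟨n - 1, by omega⟩} : Finset (Fin n)) = T ∧
          (BS n).Adj π τ) ↔ (S ∩ T).card = 1) ∧
      (∀ π τ : Equiv.Perm (Fin n),
          ({π ⟨n - 2, by omega⟩, π ⟨n - 1, by omega⟩} : Finset (Fin n)) = S →
          ({τ ⟨n - 2, by omega⟩, τ ⟨n - 1, by omega⟩} : Finset (Fin n)) = T →
          (BS n).Adj π τ → τ = π * bsGen n (n - 2))) ∧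
    Nonempty
      ((SimpleGraph.fromRel (fun A B : {S : Finset (Fin n) // S.card = 2} =>
          ∃ π τ : Equiv.Perm (Fin n),
            ({π ⟨n - 2, by omega⟩, π ⟨n - 1, by omega⟩} : Finset (Fin n)) = A.1 ∧
            ({τ ⟨n - 2, by omega⟩, τ ⟨n - 1, by omega⟩} : Finset (Fin n)) = B.1 ∧
            (BS n).Adj π τ)) ≃g
        (SimpleGraph.fromRel (fun A B : {S : Finset (Fin n) // S.card = 2} =>
          (A.1 ∩ B.1).card = 1))) := by
  have hn3 : 3 ≤ n := by omega
  simp only [← tailEntries_eq_pair (by omega : 2 ≤ n)]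
  have hfactor : SimpleGraph.fromRel (fun A B : {S : Finset (Fin n) // #S = 2} =>
        ∃ π τ : Perm (Fin n), tailEntries π = A.1 ∧ tailEntries τ = B.1 ∧ (BS n).Adj π τ) =
      SimpleGraph.fromRel (fun A B : {S : Finset (Fin n) // #S = 2} => #(A.1 ∩ B.1) = 1) := by
    ext A B
    simp only [SimpleGraph.fromRel_adj]
    refine and_congr_right fun hAB => ?_
    have hAB' : A.1 ≠ B.1 := Subtype.coe_ne_coe.mpr hAB
    rw [exists_adj_tailEntries_iff hn3 A.2 B.2 hAB',
      exists_adj_tailEntries_iff hn3 B.2 A.2 hAB'.symm]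
  refine ⟨fun S T hS hT hST => ⟨exists_adj_tailEntries_iff hn3 hS hT hST, ?_⟩, ⟨hfactor ▸ .refl⟩⟩
  rintro π τ rfl rfl hadj
  exact eq_mul_bsGen_of_adj_of_tailEntries_ne hadj hST
end
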